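/- arXiv:1605.00866 — 2 statements merged into one kernel-verified Lean document; each statement's English description precedes it below -/
import Mathlib

section
/- Let Φ be a finite crystallographic root system with coroot lattice Q∨. Call ν ∈ V 'small' if (ν, α) < 1 for every α ∈ Φ. If μ and ν are both small and μ − ν ∈ Q∨, then μ = ν. -/
open RealInnerProductSpace

/-- The coroot `α∨ = 2α/(α,α)` of a vector `α` in a real inner product space. -/
noncomputable def coroot {V : Type*} [NormedAddCommGroup V] [InnerProductSpace ℝ V] (α : V) : V :=
  (2 / ⟪α, α⟫) • α

/-- A finite reduced crystallographic root system in a real inner product space. -/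
structure IsCrystRootSystem {V : Type*} [NormedAddCommGroup V] [InnerProductSpace ℝ V]
    (Φ : Set V) : Prop where
  finite : Φ.Finite
  ne_zero : ∀ α ∈ Φ, α ≠ 0
  neg_mem : ∀ α ∈ Φ, -α ∈ Φ
  reduced : ∀ α ∈ Φ, ∀ t : ℝ, t • α ∈ Φ → t = 1 ∨ t = -1
  reflect_mem : ∀ α ∈ Φ, ∀ β ∈ Φ, β - ⟪β, coroot α⟫ • α ∈ Φ
  crystallographic : ∀ α ∈ Φ, ∀ β ∈ Φ, ∃ n : ℤ, ⟪β, coroot α⟫ = (n : ℝ)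

lemma coroot_neg {V : Type*} [NormedAddCommGroup V] [InnerProductSpace ℝ V] (α : V) :
    coroot (-α) = - coroot α := by
  simp [coroot, inner_neg_neg]

lemma list_inner_sum {V : Type*} [NormedAddCommGroup V] [InnerProductSpace ℝ V]
    (l : List V) (γ : V) : ⟪l.sum, γ⟫ = (l.map (fun y => ⟪y, γ⟫)).sum := by
  induction l with
  | nil => simp
  | cons a t ih => simp [inner_add_left, ih]

lemma inner_list_sum {V : Type*} [NormedAddCommGroup V] [InnerProductSpace ℝ V]
    (l : List V) (γ : V) : ⟪γ, l.sum⟫ = (l.map (fun y => ⟪γ, y⟫)).sum := by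
  induction l with
  | nil => simp
  | cons a t ih => simp [inner_add_right, ih]


lemma my_inner_self_pos {V : Type*} [NormedAddCommGroup V] [InnerProductSpace ℝ V]
    {x : V} (hx : x ≠ 0) : (0:ℝ) < ⟪x, x⟫ :=
  lt_of_le_of_ne real_inner_self_nonneg (fun h => hx (inner_self_eq_zero.1 h.symm))

lemma my_list_sum_nonpos (l : List ℝ) (h : ∀ x ∈ l, x ≤ 0) : l.sum ≤ 0 := by
  induction l with
  | nil => simp
  | cons a t ih =>
    simp only [List.sum_cons]
    have := h a (by simp)
    have := ih (fun x hx => h x (List.mem_cons_of_mem a hx))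
    linarith

lemma my_list_sum_int {V : Type*} [NormedAddCommGroup V] [InnerProductSpace ℝ V]
    (l : List V) (γ : V) (h : ∀ y ∈ l, ∃ m : ℤ, ⟪y, γ⟫ = (m : ℝ)) :
    ∃ m : ℤ, ⟪l.sum, γ⟫ = (m : ℝ) := by
  induction l with
  | nil => exact ⟨0, by simp⟩
  | cons a t ih =>
    obtain ⟨m, hm⟩ := h a (by simp)
    obtain ⟨k, hk⟩ := ih (fun y hy => h y (List.mem_cons_of_mem a hy))
    exact ⟨m + k, by push_cast; simp [inner_add_left, hm, hk]⟩

lemma my_list_sum_map_neg {V : Type*} [AddCommGroup V] (l : List V) :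
    (l.map Neg.neg).sum = -l.sum := by
  induction l with
  | nil => simp
  | cons a t ih => simp [ih]; abel

/-- Key lemma: a sum of coroots pairing in `(-2, 2)` with every root is zero. -/
lemma key_lemma {V : Type*} [NormedAddCommGroup V] [InnerProductSpace ℝ V]
    {Φ : Set V} (hΦ : IsCrystRootSystem Φ) :
    ∀ (n : ℕ) (l : List V), l.length = n → (∀ x ∈ l, x ∈ coroot '' Φ) →
      (∀ α ∈ Φ, |⟪l.sum, α⟫| < 2) → l.sum = 0 := by
  intro n
  induction n with
  | zero =>
    intro l hl _ _
    rw [List.length_eq_zero_iff] at hl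
    simp [hl]
  | succ n ih =>
    intro l hlen hmem hb
    by_contra hne
    have hsq : (0:ℝ) < ⟪l.sum, l.sum⟫ := my_inner_self_pos hne
    -- find a term pairing positively with the sum
    have hex : ∃ x ∈ l, (0:ℝ) < ⟪l.sum, x⟫ := by
      by_contra h
      push_neg at h
      have : ⟪l.sum, l.sum⟫ ≤ 0 := by
        rw [inner_list_sum]
        apply my_list_sum_nonpos
        intro a ha
        obtain ⟨y, hy, rfl⟩ := List.mem_map.1 ha
        exact h y hy
      linarith
    obtain ⟨x, hxl, hxpos⟩ := hex
    obtain ⟨γ, hγΦ, rfl⟩ := hmem x hxl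
    have hγ0 : γ ≠ 0 := hΦ.ne_zero γ hγΦ
    have hγγ : (0:ℝ) < ⟪γ, γ⟫ := my_inner_self_pos hγ0
    have hcor : ⟪l.sum, coroot γ⟫ = 2 / ⟪γ, γ⟫ * ⟪l.sum, γ⟫ := by
      simp [coroot, real_inner_smul_right]
    have hpos : (0:ℝ) < ⟪l.sum, γ⟫ := by
      rw [hcor] at hxpos
      by_contra h
      push_neg at h
      have h2 : (0:ℝ) < 2 / ⟪γ, γ⟫ := by positivity
      nlinarith
    -- integrality of ⟪l.sum, γ⟫... rather ⟪l.sum, coroot δ⟫? We need ⟪l.sum, γ⟫ ∈ ℤ.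
    have hint : ∃ m : ℤ, ⟪l.sum, γ⟫ = (m : ℝ) := by
      apply my_list_sum_int
      intro y hy
      obtain ⟨β, hβΦ, rfl⟩ := hmem y hy
      obtain ⟨m, hm⟩ := hΦ.crystallographic β hβΦ γ hγΦ
      exact ⟨m, by rw [real_inner_comm]; exact hm⟩
    obtain ⟨m, hm⟩ := hint
    have habs : |⟪l.sum, γ⟫| < 2 := hb γ hγΦ
    have hm1 : ⟪l.sum, γ⟫ = 1 := by
      rw [hm] at hpos habs ⊢
      rw [abs_lt] at habs
      have h1 : (0:ℤ) < m := by exact_mod_cast hpos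
      have h2 : (m:ℤ) < 2 := by exact_mod_cast habs.2
      have : m = 1 := by omega
      rw [this]; norm_num
    -- split the list
    obtain ⟨l₁, l₂, rfl⟩ := List.append_of_mem hxl
    have hsum : (l₁ ++ coroot γ :: l₂).sum = coroot γ + (l₁ ++ l₂).sum := by
      simp [List.sum_append, List.sum_cons]
      abel
    set lam := (l₁ ++ coroot γ :: l₂).sum with hlam
    have hb' : ∀ α ∈ Φ, |⟪(l₁ ++ l₂).sum, α⟫| < 2 := by
      intro α hα
      have hβΦ : α - ⟪α, coroot γ⟫ • γ ∈ Φ := hΦ.reflect_mem γ hγΦ α hα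
      have heq : ⟪(l₁ ++ l₂).sum, α⟫ = ⟪lam, α - ⟪α, coroot γ⟫ • γ⟫ := by
        have h1 : (l₁ ++ l₂).sum = lam - coroot γ := by rw [hsum]; abel
        rw [h1, inner_sub_left, inner_sub_right, real_inner_smul_right]
        have h2 : ⟪coroot γ, α⟫ = 2 / ⟪γ, γ⟫ * ⟪γ, α⟫ := by
          simp [coroot, real_inner_smul_left]
        have h3 : ⟪α, coroot γ⟫ = 2 / ⟪γ, γ⟫ * ⟪α, γ⟫ := by
          simp [coroot, real_inner_smul_right]
        rw [h2, h3, hm1, real_inner_comm γ α]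
        ring
      rw [heq]
      exact hb _ hβΦ
    have hmem' : ∀ x ∈ l₁ ++ l₂, x ∈ coroot '' Φ := by
      intro x hx
      apply hmem
      rcases List.mem_append.1 hx with h | h
      · exact List.mem_append.2 (Or.inl h)
      · exact List.mem_append.2 (Or.inr (List.mem_cons_of_mem _ h))
    have hlen' : (l₁ ++ l₂).length = n := by
      simp at hlen ⊢
      omega
    have hzero : (l₁ ++ l₂).sum = 0 := ih (l₁ ++ l₂) hlen' hmem' hb'
    have : lam = coroot γ := by rw [hsum, hzero, add_zero]
    rw [this] at hm1
    have : ⟪coroot γ, γ⟫ = 2 := by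
      simp [coroot, real_inner_smul_left]
      field_simp
    rw [this] at hm1
    norm_num at hm1

/-- If `μ` and `ν` are small (pairing `< 1` with every root) and `μ − ν` lies in the coroot
lattice, then `μ = ν`. -/
theorem stmt1 {V : Type*} [NormedAddCommGroup V] [InnerProductSpace ℝ V]
    [FiniteDimensional ℝ V] {Φ : Set V} (hΦ : IsCrystRootSystem Φ)
    (μ ν : V) (hμ : ∀ α ∈ Φ, ⟪μ, α⟫ < 1) (hν : ∀ α ∈ Φ, ⟪ν, α⟫ < 1)
    (hd : μ - ν ∈ AddSubgroup.closure (coroot '' Φ)) : μ = ν := by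
  -- express μ - ν as a sum of a list of coroots
  have hlist : ∃ l : List V, (∀ x ∈ l, x ∈ coroot '' Φ) ∧ l.sum = μ - ν := by
    refine AddSubgroup.closure_induction ?_ ?_ ?_ ?_ hd
    · intro x hx
      exact ⟨[x], by simpa using hx, by simp⟩
    · exact ⟨[], by simp, by simp⟩
    · rintro x y _ _ ⟨lx, hlx, hlxs⟩ ⟨ly, hly, hlys⟩
      refine ⟨lx ++ ly, ?_, by simp [List.sum_append, hlxs, hlys]⟩
      intro z hz
      rcases List.mem_append.1 hz with h | h
      · exact hlx z h
      · exact hly z h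
    · rintro x _ ⟨l, hl, hls⟩
      refine ⟨l.map Neg.neg, ?_, ?_⟩
      · intro z hz
        obtain ⟨y, hy, rfl⟩ := List.mem_map.1 hz
        obtain ⟨β, hβ, rfl⟩ := hl y hy
        exact ⟨-β, hΦ.neg_mem β hβ, coroot_neg β⟩
      · rw [← hls, my_list_sum_map_neg]
  obtain ⟨l, hl, hls⟩ := hlist
  have hb : ∀ α ∈ Φ, |⟪l.sum, α⟫| < 2 := by
    intro α hα
    have h1 : ⟪μ, α⟫ < 1 := hμ α hα
    have h2 : ⟪ν, α⟫ < 1 := hν α hα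
    have h3 : ⟪μ, -α⟫ < 1 := hμ (-α) (hΦ.neg_mem α hα)
    have h4 : ⟪ν, -α⟫ < 1 := hν (-α) (hΦ.neg_mem α hα)
    rw [inner_neg_right] at h3 h4
    rw [hls, inner_sub_left, abs_lt]
    constructor <;> linarith
  have := key_lemma hΦ l.length l rfl hl hb
  rw [hls] at this
  exact sub_eq_zero.1 this
end

section
/- Let V be a Euclidean space with root system Φ, ρ half the sum of positive roots, and dot-action w.λ = w(λ+ρ) − ρ. If Λ is dominant (i.e. (Λ+ρ, α∨) ≥ 0 for all positive roots α), α is a positive root, and Λ' satisfies (Λ'+ρ, α∨) ≥ 0, then ‖Λ − Λ'‖ ≤ ‖Λ − s_α.Λ'‖, with equality if and only if s_α fixes Λ under the dot action or fixes Λ' under the dot action (equivalently (Λ+ρ, α) = 0 or (Λ'+ρ, α∨) = 0). -/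
open RealInnerProductSpace

/-- Dot-action of the reflection `s_α`: `s_α.λ = s_α(λ+ρ) − ρ` where
`s_α(v) = v − (v,α∨)α`. -/
noncomputable def dotReflect {V : Type*} [NormedAddCommGroup V] [InnerProductSpace ℝ V]
    (α ρ lam : V) : V :=
  ((lam + ρ) - ⟪lam + ρ, coroot α⟫ • α) - ρ

/-- If `Λ` is dominant, `α` is a positive root and `(Λ'+ρ, α∨) ≥ 0`, then
`‖Λ − Λ'‖ ≤ ‖Λ − s_α.Λ'‖`, with equality iff `(Λ+ρ, α) = 0` or `(Λ'+ρ, α∨) = 0`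
(i.e. iff `s_α` fixes `Λ` resp. `Λ'` under the dot action). -/
theorem stmt4 {V : Type*} [NormedAddCommGroup V] [InnerProductSpace ℝ V]
    [FiniteDimensional ℝ V]
    (Φplus : Finset V) (hnz : ∀ β ∈ Φplus, β ≠ 0)
    (ρ : V) (hρ : ρ = (2 : ℝ)⁻¹ • ∑ β ∈ Φplus, β)
    (Λ Λ' α : V) (hα : α ∈ Φplus)
    (hdom : ∀ β ∈ Φplus, 0 ≤ ⟪Λ + ρ, coroot β⟫)
    (h' : 0 ≤ ⟪Λ' + ρ, coroot α⟫) :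
    ‖Λ - Λ'‖ ≤ ‖Λ - dotReflect α ρ Λ'‖ ∧
    (‖Λ - Λ'‖ = ‖Λ - dotReflect α ρ Λ'‖ ↔ ⟪Λ + ρ, α⟫ = 0 ∨ ⟪Λ' + ρ, coroot α⟫ = 0) := by
  classical
  have hα0 : α ≠ 0 := hnz α hα
  have hn0 : 0 < ‖α‖ := norm_pos_iff.mpr hα0
  have ht : (0:ℝ) < ⟪α, α⟫ := by rw [real_inner_self_eq_norm_sq]; positivity
  have h2t : (0:ℝ) < 2 / ⟪α, α⟫ := by positivity
  have hd : 0 ≤ ⟪Λ + ρ, coroot α⟫ := hdom α hα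
  have hcoro : ∀ v : V, ⟪v, coroot α⟫ = 2 / ⟪α, α⟫ * ⟪v, α⟫ := by
    intro v; simp [coroot, real_inner_smul_right]
  have ha : 0 ≤ ⟪Λ + ρ, α⟫ := by
    have h2 := hd; rw [hcoro] at h2
    exact nonneg_of_mul_nonneg_left (by rwa [mul_comm] at h2) h2t
  have hb : 0 ≤ ⟪Λ' + ρ, α⟫ := by
    have h2 := h'; rw [hcoro] at h2
    exact nonneg_of_mul_nonneg_left (by rwa [mul_comm] at h2) h2t
  have hx : Λ - dotReflect α ρ Λ' = (Λ - Λ') + (2 / ⟪α, α⟫ * ⟪Λ' + ρ, α⟫) • α := by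
    rw [dotReflect, hcoro]
    abel
  have hinner : ⟪Λ - Λ', α⟫ = ⟪Λ + ρ, α⟫ - ⟪Λ' + ρ, α⟫ := by
    have h3 : Λ - Λ' = (Λ + ρ) - (Λ' + ρ) := by abel
    rw [h3, inner_sub_left]
  have hnα : ‖α‖ ^ 2 = ⟪α, α⟫ := (real_inner_self_eq_norm_sq α).symm
  have hsq : ‖Λ - dotReflect α ρ Λ'‖ ^ 2
      = ‖Λ - Λ'‖ ^ 2 + 4 * ⟪Λ + ρ, α⟫ * ⟪Λ' + ρ, α⟫ / ⟪α, α⟫ := by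
    rw [hx, norm_add_sq_real, real_inner_smul_right, hinner, norm_smul,
      mul_pow, Real.norm_eq_abs, sq_abs, hnα]
    field_simp
    ring
  have hle2 : ‖Λ - Λ'‖ ^ 2 ≤ ‖Λ - dotReflect α ρ Λ'‖ ^ 2 := by
    rw [hsq]
    have : 0 ≤ 4 * ⟪Λ + ρ, α⟫ * ⟪Λ' + ρ, α⟫ / ⟪α, α⟫ := by positivity
    linarith
  have hle : ‖Λ - Λ'‖ ≤ ‖Λ - dotReflect α ρ Λ'‖ :=
    (pow_le_pow_iff_left₀ (norm_nonneg _) (norm_nonneg _) two_ne_zero).mp hle2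
  refine ⟨hle, ?_⟩
  constructor
  · intro heq
    have h4 : 4 * ⟪Λ + ρ, α⟫ * ⟪Λ' + ρ, α⟫ / ⟪α, α⟫ = 0 := by
      have h5 := hsq
      rw [← heq] at h5
      linarith
    have h5 : ⟪Λ + ρ, α⟫ * ⟪Λ' + ρ, α⟫ = 0 := by
      rcases div_eq_zero_iff.mp h4 with h | h
      · nlinarith
      · exact absurd h ht.ne'
    rcases mul_eq_zero.mp h5 with h | h
    · exact Or.inl h
    · exact Or.inr (by rw [hcoro, h, mul_zero])
  · intro h
    have hzero : 4 * ⟪Λ + ρ, α⟫ * ⟪Λ' + ρ, α⟫ / ⟪α, α⟫ = 0 := by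
      rcases h with h | h
      · rw [h]; ring
      · rw [hcoro] at h
        have hb0 : ⟪Λ' + ρ, α⟫ = 0 := by
          rcases mul_eq_zero.mp h with h2 | h2
          · exact absurd h2 h2t.ne'
          · exact h2
        rw [hb0]; ring
    have hsqeq : ‖Λ - Λ'‖ ^ 2 = ‖Λ - dotReflect α ρ Λ'‖ ^ 2 := by rw [hsq, hzero]; ring
    exact (pow_left_inj₀ (norm_nonneg _) (norm_nonneg _) two_ne_zero).mp hsqeq
end
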